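/- arXiv:2011.00522 — 3 statements merged into one kernel-verified Lean document; each statement's English description precedes it below -/
import Mathlib

section
/- Let G be the join of graphs G₁, …, G_ℓ with ℓ ≥ 2. Suppose there exist two distinct indices i and j such that G_i is a single vertex or contains a vertex w_i with V(G_i) \ N_{G_i}[w_i] a clique in G_i, and likewise for G_j. Then G satisfies property P: there exist distinct vertices x, y with {x, y} dominating in G and V(G) \ N_G[x], V(G) \ N_G[y] each empty or a clique. -/
open SimpleGraph

/-- `D` is a dominating set of `G`. -/
def Dominating {V : Type*} (G : SimpleGraph V) (D : Set V) : Prop :=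
  ∀ v ∉ D, ∃ u ∈ D, G.Adj u v

/-- `S` is a secure dominating set of `G`. -/
def SecureDominating {V : Type*} (G : SimpleGraph V) (S : Set V) : Prop :=
  Dominating G S ∧ ∀ v ∉ S, ∃ u ∈ S, G.Adj u v ∧ Dominating G ((S ∪ {v}) \ {u})

/-- Domination number. -/
noncomputable def gamma {V : Type*} (G : SimpleGraph V) : ℕ :=
  sInf {n | ∃ D : Set V, Dominating G D ∧ D.ncard = n}

/-- Secure domination number. -/
noncomputable def gammaS {V : Type*} (G : SimpleGraph V) : ℕ :=
  sInf {n | ∃ S : Set V, SecureDominating G S ∧ S.ncard = n}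

/-- The closed neighborhood of `v` as a set. -/
def closedNbhd {V : Type*} (G : SimpleGraph V) (v : V) : Set V :=
  insert v (G.neighborSet v)

/-- The join of a family of graphs. -/
def JoinFam {ι : Type*} {V : ι → Type*} (G : ∀ i, SimpleGraph (V i)) :
    SimpleGraph (Σ i, V i) where
  Adj x y := (∃ (i : ι) (a b : V i), x = ⟨i, a⟩ ∧ y = ⟨i, b⟩ ∧ (G i).Adj a b) ∨ x.1 ≠ y.1
  symm := by
    constructor
    rintro x y (⟨k, c, d, rfl, rfl, h3⟩ | h)
    · exact Or.inl ⟨k, d, c, rfl, rfl, h3.symm⟩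
    · exact Or.inr h.symm
  loopless := by
    constructor
    rintro x (⟨k, c, d, rfl, h2, h3⟩ | h)
    · cases h2; exact h3.ne rfl
    · exact h rfl

/-- The join of two graphs. -/
def join2 {α β : Type*} (G : SimpleGraph α) (H : SimpleGraph β) :
    SimpleGraph (α ⊕ β) where
  Adj x y := match x, y with
    | .inl a, .inl b => G.Adj a b
    | .inr a, .inr b => H.Adj a b
    | .inl _, .inr _ => True
    | .inr _, .inl _ => True
  symm := by constructor; rintro (a | a) (b | b) h <;> simp_all [SimpleGraph.adj_comm]
  loopless := by constructor; rintro (a | a) h <;> exact h.ne rfl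

/-- The disjoint union of two graphs. -/
def disjUnion2 {α β : Type*} (G : SimpleGraph α) (H : SimpleGraph β) :
    SimpleGraph (α ⊕ β) where
  Adj x y := match x, y with
    | .inl a, .inl b => G.Adj a b
    | .inr a, .inr b => H.Adj a b
    | _, _ => False
  symm := by constructor; rintro (a | a) (b | b) h <;> simp_all [SimpleGraph.adj_comm]
  loopless := by constructor; rintro (a | a) h <;> exact h.ne rfl

/-- Property `P`. -/
def PropP {V : Type*} (G : SimpleGraph V) : Prop :=
  ∃ x y : V, x ≠ y ∧ Dominating G {x, y} ∧
    ((closedNbhd G x)ᶜ = ∅ ∨ G.IsClique (closedNbhd G x)ᶜ) ∧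
    ((closedNbhd G y)ᶜ = ∅ ∨ G.IsClique (closedNbhd G y)ᶜ)

/-
In the join every vertex outside the part `G_k` is adjacent to every vertex of `G_k`, so a vertex
`⟨k, w⟩` misses exactly the vertices of `G_k` that `w` misses inside `G_k`; these still form a
clique in the join. Choosing good vertices `w_i`, `w_j` in two distinct parts (any vertex of a
one-vertex part is good), the pair `⟨i, w_i⟩, ⟨j, w_j⟩` dominates, since each vertex lies outside
part `i` or outside part `j`.
-/

theorem isClique_compl_closedNbhd_of_forall_eq {V : Type*} (G : SimpleGraph V) {u : V}
    (hu : ∀ v, v = u) : G.IsClique (closedNbhd G u)ᶜ := by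
  have hempty : (closedNbhd G u)ᶜ = ∅ := by
    ext v
    simp [closedNbhd, hu v]
  simp [hempty]

theorem exists_isClique_compl_closedNbhd {V : Type*} (G : SimpleGraph V)
    (h : (∃ u : V, ∀ v, v = u) ∨ ∃ w, G.IsClique (closedNbhd G w)ᶜ) :
    ∃ w, G.IsClique (closedNbhd G w)ᶜ := by
  rcases h with ⟨u, hu⟩ | hw
  exacts [⟨u, isClique_compl_closedNbhd_of_forall_eq G hu⟩, hw]

section JoinFam

variable {ι : Type*} {V : ι → Type*} (G : ∀ k, SimpleGraph (V k))

theorem joinFam_adj_of_fst_ne {x y : Σ k, V k} (h : x.1 ≠ y.1) : (JoinFam G).Adj x y :=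
  Or.inr h

theorem joinFam_adj_mk_iff {k : ι} {a b : V k} :
    (JoinFam G).Adj ⟨k, a⟩ ⟨k, b⟩ ↔ (G k).Adj a b := by
  constructor
  · rintro (⟨m, a', b', ha, hb, hadj⟩ | hne)
    · obtain ⟨rfl, ha⟩ := Sigma.mk.inj_iff.mp ha
      obtain ⟨-, hb⟩ := Sigma.mk.inj_iff.mp hb
      rwa [eq_of_heq ha, eq_of_heq hb]
    · exact absurd rfl hne
  · exact fun h => Or.inl ⟨k, a, b, rfl, rfl, h⟩

theorem compl_closedNbhd_joinFam_mk (k : ι) (w : V k) :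
    (closedNbhd (JoinFam G) ⟨k, w⟩)ᶜ = Sigma.mk k '' (closedNbhd (G k) w)ᶜ := by
  ext ⟨m, a⟩
  by_cases hm : k = m
  · subst hm
    simp [closedNbhd, joinFam_adj_mk_iff]
  · have hadj : (JoinFam G).Adj ⟨k, w⟩ ⟨m, a⟩ := joinFam_adj_of_fst_ne G hm
    simp only [closedNbhd, Set.mem_compl_iff, Set.mem_insert_iff, mem_neighborSet, hadj,
      or_true, not_true_eq_false, Set.mem_image, Sigma.mk.inj_iff, false_iff, not_exists,
      not_and]
    exact fun _ _ hkm => absurd hkm hm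

theorem isClique_compl_closedNbhd_joinFam_mk {k : ι} {w : V k}
    (hw : (G k).IsClique (closedNbhd (G k) w)ᶜ) :
    (JoinFam G).IsClique (closedNbhd (JoinFam G) ⟨k, w⟩)ᶜ := by
  rw [compl_closedNbhd_joinFam_mk]
  rintro _ ⟨a, ha, rfl⟩ _ ⟨b, hb, rfl⟩ hne
  exact (joinFam_adj_mk_iff G).mpr (hw ha hb fun hab => hne (hab ▸ rfl))

theorem dominating_joinFam_pair {i j : ι} (hij : i ≠ j) (a : V i) (b : V j) :
    Dominating (JoinFam G) {⟨i, a⟩, ⟨j, b⟩} := by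
  rintro ⟨k, c⟩ -
  by_cases hk : k = i
  · exact ⟨⟨j, b⟩, Or.inr rfl, joinFam_adj_of_fst_ne G (hk ▸ hij).symm⟩
  · exact ⟨⟨i, a⟩, Or.inl rfl, joinFam_adj_of_fst_ne G (Ne.symm hk)⟩

end JoinFam

theorem join_two_good_parts_satisfies_propP_general
    {ℓ : ℕ} {V : Fin ℓ → Type*}
    (G : ∀ k, SimpleGraph (V k)) (i j : Fin ℓ) (hij : i ≠ j)
    (hi : (∃ u : V i, ∀ v : V i, v = u) ∨
      ∃ w : V i, (G i).IsClique (closedNbhd (G i) w)ᶜ)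
    (hj : (∃ u : V j, ∀ v : V j, v = u) ∨
      ∃ w : V j, (G j).IsClique (closedNbhd (G j) w)ᶜ) :
    PropP (JoinFam G) := by
  obtain ⟨wi, hwi⟩ := exists_isClique_compl_closedNbhd (G i) hi
  obtain ⟨wj, hwj⟩ := exists_isClique_compl_closedNbhd (G j) hj
  exact ⟨⟨i, wi⟩, ⟨j, wj⟩, fun h => hij (congrArg Sigma.fst h),
    dominating_joinFam_pair G hij wi wj,
    Or.inr (isClique_compl_closedNbhd_joinFam_mk G hwi),
    Or.inr (isClique_compl_closedNbhd_joinFam_mk G hwj)⟩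

theorem join_two_good_parts_satisfies_propP
    {ℓ : ℕ} (hℓ : 2 ≤ ℓ) {V : Fin ℓ → Type*} [∀ k, Fintype (V k)]
    (G : ∀ k, SimpleGraph (V k)) (i j : Fin ℓ) (hij : i ≠ j)
    (hi : (∃ u : V i, ∀ v : V i, v = u) ∨
      ∃ w : V i, (G i).IsClique (closedNbhd (G i) w)ᶜ)
    (hj : (∃ u : V j, ∀ v : V j, v = u) ∨
      ∃ w : V j, (G j).IsClique (closedNbhd (G j) w)ᶜ) :
    PropP (JoinFam G) :=
  join_two_good_parts_satisfies_propP_general G i j hij hi hj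
end

section
/- For each k ≥ 1, the graph G_k (as defined) is the join of H₁ and H₂, where H₁ is the edgeless graph on {c, d, e} and H₂ is the disjoint union of K_k on {a₁,…,a_k} and the isolated vertex b. Moreover H₁ has more than one vertex, is connected-complement-free in the sense that H₁ is not a single vertex, and there is no vertex w ∈ V(H₁) with V(H₁) \ N_{H₁}[w] a clique of H₁; hence G_k satisfies property P while failing condition (i) of the original Lemma 2 of Jha–Pradhan–Banerjee. -/
open SimpleGraph

/-- The graph `G_k`: vertices `a_1,...,a_k` (as `Sum.inl i`) forming a clique, and
`b = Sum.inr 0`, `c = Sum.inr 1`, `d = Sum.inr 2`, `e = Sum.inr 3`; `b` is adjacent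
exactly to `c, d, e`, each of `c, d, e` is adjacent to every `a_i`, and `c, d, e`
are pairwise nonadjacent. -/
def Gk (k : ℕ) : SimpleGraph (Fin k ⊕ Fin 4) where
  Adj x y := match x, y with
    | .inl i, .inl j => i ≠ j
    | .inl _, .inr m => m ≠ 0
    | .inr m, .inl _ => m ≠ 0
    | .inr m, .inr n => (m = 0 ∧ n ≠ 0) ∨ (n = 0 ∧ m ≠ 0)
  symm := by constructor; rintro (a|a) (b|b) h <;> simp_all <;> tauto
  loopless := by constructor; rintro (a|a) h <;> simp_all


/-!
The vertex `b` and any `aᵢ` witness property `P`: the non-neighbours of `b` are exactly the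
clique `{a₁, …, a_k}`, the only non-neighbour of `aᵢ` is `b`, and so the two closed
neighbourhoods cover the graph. Condition (i) fails on the edgeless side `{c, d, e}` of the join:
every vertex there has two non-adjacent non-neighbours.
-/
theorem closedNbhd_bot {V : Type*} (w : V) : closedNbhd (⊥ : SimpleGraph V) w = {w} := by
  simp [closedNbhd]

theorem not_isClique_bot_compl_closedNbhd {V : Type*} [Finite V] (hV : 2 < Nat.card V) (w : V) :
    ¬ (⊥ : SimpleGraph V).IsClique (closedNbhd ⊥ w)ᶜ := by
  rw [closedNbhd_bot, isClique_bot_iff]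
  intro h
  have hcard := Set.ncard_add_ncard_compl {w}
  have hle := (Set.ncard_le_one_iff (Set.toFinite _)).2 fun ha hb => h ha hb
  rw [Set.ncard_singleton] at hcard
  omega

theorem dominating_pair_of_compl_closedNbhd_subset {V : Type*} {G : SimpleGraph V} {x y : V}
    (h : (closedNbhd G x)ᶜ ⊆ closedNbhd G y) : Dominating G {x, y} := by
  intro v hv
  simp only [Set.mem_insert_iff, Set.mem_singleton_iff, not_or] at hv
  by_cases hvx : v ∈ closedNbhd G x
  · exact ⟨x, by simp, by simpa [closedNbhd, hv.1] using hvx⟩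
  · exact ⟨y, by simp, by simpa [closedNbhd, hv.2] using h hvx⟩

theorem propP_of_compl_closedNbhd {V : Type*} {G : SimpleGraph V} {x y : V} (hxy : x ≠ y)
    (hdom : (closedNbhd G x)ᶜ ⊆ closedNbhd G y)
    (hx : G.IsClique (closedNbhd G x)ᶜ) (hy : G.IsClique (closedNbhd G y)ᶜ) : PropP G :=
  ⟨x, y, hxy, dominating_pair_of_compl_closedNbhd_subset hdom, .inr hx, .inr hy⟩

namespace Gk

variable {k : ℕ}

@[simp] theorem adj_inl_inl {i j : Fin k} : (Gk k).Adj (.inl i) (.inl j) ↔ i ≠ j := .rfl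
@[simp] theorem adj_inl_inr {i : Fin k} {m : Fin 4} : (Gk k).Adj (.inl i) (.inr m) ↔ m ≠ 0 :=
  .rfl
@[simp] theorem adj_inr_inl {i : Fin k} {m : Fin 4} : (Gk k).Adj (.inr m) (.inl i) ↔ m ≠ 0 :=
  .rfl
@[simp] theorem adj_inr_inr {m n : Fin 4} :
    (Gk k).Adj (.inr m) (.inr n) ↔ (m = 0 ∧ n ≠ 0) ∨ (n = 0 ∧ m ≠ 0) := .rfl

theorem compl_closedNbhd_inr_zero : (closedNbhd (Gk k) (.inr 0))ᶜ = Set.range Sum.inl := by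
  ext (i | m) <;> simp [closedNbhd]

theorem compl_closedNbhd_inl (i : Fin k) : (closedNbhd (Gk k) (.inl i))ᶜ = {.inr 0} := by
  ext (j | m) <;> simp [closedNbhd, eq_comm]

theorem isClique_range_inl : (Gk k).IsClique (Set.range Sum.inl) := by
  rintro _ ⟨i, rfl⟩ _ ⟨j, rfl⟩ h
  simpa using h

theorem propP (hk : 0 < k) : PropP (Gk k) := by
  refine propP_of_compl_closedNbhd (x := .inr 0) (y := .inl ⟨0, hk⟩) Sum.inr_ne_inl ?_ ?_ ?_
  · rw [compl_closedNbhd_inr_zero, ← compl_compl (closedNbhd _ _), compl_closedNbhd_inl]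
    rintro _ ⟨i, rfl⟩
    simp
  · simpa only [compl_closedNbhd_inr_zero] using isClique_range_inl
  · simpa only [compl_closedNbhd_inl] using isClique_singleton _

variable (k)

def vertexEquiv : Fin k ⊕ Fin 4 ≃ Fin 3 ⊕ (Fin k ⊕ Fin 1) where
  toFun
    | .inl i => .inr (.inl i)
    | .inr 0 => .inr (.inr 0)
    | .inr 1 => .inl 0
    | .inr 2 => .inl 1
    | .inr 3 => .inl 2
  invFun
    | .inr (.inl i) => .inl i
    | .inr (.inr _) => .inr 0
    | .inl 0 => .inr 1
    | .inl 1 => .inr 2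
    | .inl 2 => .inr 3
  left_inv := by rintro (i | m) <;> (try fin_cases m) <;> rfl
  right_inv := by rintro (j | i | o) <;> (try fin_cases j) <;> (try fin_cases o) <;> rfl

def isoJoin : Gk k ≃g join2 (⊥ : SimpleGraph (Fin 3))
    (disjUnion2 (⊤ : SimpleGraph (Fin k)) (⊤ : SimpleGraph (Fin 1))) where
  toEquiv := vertexEquiv k
  map_rel_iff' := by
    rintro (i | m) (j | n) <;> (try fin_cases m) <;> (try fin_cases n) <;>
      simp [vertexEquiv, join2, disjUnion2]

end Gk

theorem Gk_is_counterexample_to_original_lemma (k : ℕ) (hk : 0 < k) :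
    Nonempty (Gk k ≃g join2 (⊥ : SimpleGraph (Fin 3))
      (disjUnion2 (⊤ : SimpleGraph (Fin k)) (⊤ : SimpleGraph (Fin 1)))) ∧
    1 < Fintype.card (Fin 3) ∧
    (¬ ∃ w : Fin 3,
      (⊥ : SimpleGraph (Fin 3)).IsClique (closedNbhd (⊥ : SimpleGraph (Fin 3)) w)ᶜ) ∧
    PropP (Gk k) :=
  ⟨⟨Gk.isoJoin k⟩, by simp,
    fun ⟨w, hw⟩ => not_isClique_bot_compl_closedNbhd (by simp) w hw, Gk.propP hk⟩
end

section
/- For every k ≥ 1, the graph G_k (join of the edgeless graph on {c,d,e} with K_k ∪ {b}) has secure domination number γ_s(G_k) = 2, with {a₁, b} a minimum secure dominating set. -/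
open SimpleGraph

/-! The pair `{a₁, b}` dominates `G_k`, and it still dominates after an outside `a_i` is swapped
in for `a₁`, or one of `c, d, e` for `b`; so it is secure. As `G_k` has no universal vertex, no
set of at most one vertex dominates. -/

section Domination

variable {V : Type*} {G : SimpleGraph V}

theorem dominating_pair_iff {x y : V} :
    Dominating G {x, y} ↔ ∀ v, v ≠ x → v ≠ y → G.Adj x v ∨ G.Adj y v := by
  simp only [Dominating, Set.mem_insert_iff, Set.mem_singleton_iff, not_or, exists_eq_or_imp,
    exists_eq_left, and_imp]

theorem secureDominating_pair {x y : V} (hxy : x ≠ y) (hD : Dominating G {x, y})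
    (hswap : ∀ v, v ≠ x → v ≠ y →
      (G.Adj x v ∧ Dominating G {v, y}) ∨ (G.Adj y v ∧ Dominating G {x, v})) :
    SecureDominating G {x, y} := by
  refine ⟨hD, fun v hv => ?_⟩
  simp only [Set.mem_insert_iff, Set.mem_singleton_iff, not_or] at hv
  rcases hswap v hv.1 hv.2 with ⟨hadj, hdom⟩ | ⟨hadj, hdom⟩
  · refine ⟨x, by simp, hadj, ?_⟩
    convert hdom using 1
    ext w
    simp only [Set.mem_sdiff, Set.mem_union, Set.mem_insert_iff, Set.mem_singleton_iff]
    grind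
  · refine ⟨y, by simp, hadj, ?_⟩
    convert hdom using 1
    ext w
    simp only [Set.mem_sdiff, Set.mem_union, Set.mem_insert_iff, Set.mem_singleton_iff]
    grind

theorem two_le_ncard_of_dominating [Finite V] [Nonempty V]
    (hG : ∀ u, ∃ v, u ≠ v ∧ ¬ G.Adj u v) {D : Set V} (hD : Dominating G D) : 2 ≤ D.ncard := by
  by_contra! hlt
  interval_cases h : D.ncard
  · rw [Set.ncard_eq_zero] at h
    subst h
    obtain ⟨u, hu, -⟩ := hD (Classical.arbitrary V) (Set.notMem_empty _)
    exact hu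
  · obtain ⟨u, rfl⟩ := Set.ncard_eq_one.mp h
    obtain ⟨v, huv, hnadj⟩ := hG u
    obtain ⟨w, rfl, hadj⟩ := hD v (Ne.symm huv)
    exact hnadj hadj

theorem gammaS_eq_two [Finite V] (hG : ∀ u, ∃ v, u ≠ v ∧ ¬ G.Adj u v) {x y : V} (hxy : x ≠ y)
    (hS : SecureDominating G {x, y}) : gammaS G = 2 := by
  have : Nonempty V := ⟨x⟩
  refine IsLeast.csInf_eq ⟨⟨{x, y}, hS, Set.ncard_pair hxy⟩, ?_⟩
  rintro n ⟨S, hS, rfl⟩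
  exact two_le_ncard_of_dominating hG hS.1

end Domination

section Gk

variable {k : ℕ}

@[simp]
theorem Gk_adj_inl_inl {i j : Fin k} : (Gk k).Adj (.inl i) (.inl j) ↔ i ≠ j := Iff.rfl

@[simp]
theorem Gk_adj_inl_inr {i : Fin k} {m : Fin 4} : (Gk k).Adj (.inl i) (.inr m) ↔ m ≠ 0 := Iff.rfl

@[simp]
theorem Gk_adj_inr_inl {i : Fin k} {m : Fin 4} : (Gk k).Adj (.inr m) (.inl i) ↔ m ≠ 0 := Iff.rfl

@[simp]
theorem Gk_adj_inr_inr {m n : Fin 4} :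
    (Gk k).Adj (.inr m) (.inr n) ↔ (m = 0 ∧ n ≠ 0) ∨ (n = 0 ∧ m ≠ 0) := Iff.rfl

theorem Gk_exists_not_adj (hk : 0 < k) (u : Fin k ⊕ Fin 4) : ∃ v, u ≠ v ∧ ¬ (Gk k).Adj u v := by
  rcases u with i | m
  · exact ⟨.inr 0, by simp⟩
  · by_cases hm : m = 0
    · exact ⟨.inl ⟨0, hk⟩, by simp [hm]⟩
    · obtain ⟨n, hmn, hn⟩ : ∃ n : Fin 4, m ≠ n ∧ n ≠ 0 := by revert m; decide
      exact ⟨.inr n, by simpa using hmn, by simp [hm, hn]⟩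

theorem Gk_dominating_inl_inr_zero (i : Fin k) : Dominating (Gk k) {.inl i, .inr 0} := by
  rw [dominating_pair_iff]
  rintro (j | n) hi hb
  · simp_all [eq_comm]
  · simp_all

theorem Gk_dominating_inl_inr (i : Fin k) {m : Fin 4} (hm : m ≠ 0) :
    Dominating (Gk k) {.inl i, .inr m} := by
  rw [dominating_pair_iff]
  rintro (j | n) hi hmn
  · simp_all [eq_comm]
  · simp_all [em']

theorem Gk_secureDominating (i : Fin k) : SecureDominating (Gk k) {.inl i, .inr 0} := by
  refine secureDominating_pair (by simp) (Gk_dominating_inl_inr_zero i) ?_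
  rintro (j | m) hi hb
  · exact .inl ⟨by simpa [eq_comm] using hi, Gk_dominating_inl_inr_zero j⟩
  · have hm : m ≠ 0 := by simpa using hb
    exact .inr ⟨by simp [hm], Gk_dominating_inl_inr i hm⟩

end Gk

theorem gammaS_Gk_eq_two (k : ℕ) (hk : 0 < k) :
    gammaS (Gk k) = 2 ∧
    SecureDominating (Gk k)
      {Sum.inl (⟨0, hk⟩ : Fin k), (Sum.inr 0 : Fin k ⊕ Fin 4)} :=
  ⟨gammaS_eq_two (Gk_exists_not_adj hk) (by simp) (Gk_secureDominating ⟨0, hk⟩),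
    Gk_secureDominating ⟨0, hk⟩⟩
end
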